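/- Let d ≥ 3 be odd and let ℰ ⊂ ℝ² be the closed triangle with vertices (0,1), (−1/2, 0) and (−1/3, 0). For (x,y) ∈ ℰ define G(x,y) = 2y − 6x + 2·(x−y)^{1/d}, where t^{1/d} denotes the unique real d-th root of t. Then G(x,y) ≥ 0 for all (x,y) ∈ ℰ, with equality if and only if (x,y) = (0,1). Equivalently, writing T_d⁻²(x,y) = (f(x,y), g(x,y)) with g(x,y) = 3y − 6x + 2(x−y)^{1/d}, one has g(x,y) ≥ y on ℰ with equality only at (0,1). -/

import Mathlib

/-- The unique real d-th root of `t` (for odd `d`). -/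
noncomputable def oddRoot (d : ℕ) (t : ℝ) : ℝ :=
  if 0 ≤ t then t ^ ((1 : ℝ) / d) else -((-t) ^ ((1 : ℝ) / d))

/-- The closed triangle `ℰ` with vertices `(0,1)`, `(−1/2,0)` and `(−1/3,0)`. -/
noncomputable def triE : Set (ℝ × ℝ) :=
  convexHull ℝ {((0 : ℝ), (1 : ℝ)), ((-1 / 2 : ℝ), (0 : ℝ)), ((-1 / 3 : ℝ), (0 : ℝ))}

/-- `G(x,y) = 2y − 6x + 2(x−y)^{1/d}`. -/
noncomputable def Gfun (d : ℕ) (p : ℝ × ℝ) : ℝ :=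
  2 * p.2 - 6 * p.1 + 2 * oddRoot d (p.1 - p.2)

/-- Second component of `T_d⁻²`: `g(x,y) = 3y − 6x + 2(x−y)^{1/d}`. -/
noncomputable def gfun (d : ℕ) (p : ℝ × ℝ) : ℝ :=
  3 * p.2 - 6 * p.1 + 2 * oddRoot d (p.1 - p.2)

/- On `ℰ` we have `y − 3x ≥ 1` and `0 ≤ y − x ≤ 1`, so `(x − y)^{1/d} = −(y − x)^{1/d} ≥ −1`
and `G(x,y) = 2(y − 3x) − 2(y − x)^{1/d} ≥ 0`. Equality forces `y − 3x = 1` and `y − x = 1`,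
i.e. `(x,y) = (0,1)`; and `g = G + y`. -/

lemma oddRoot_neg {d : ℕ} (hd : d ≠ 0) {t : ℝ} (ht : 0 ≤ t) :
    oddRoot d (-t) = -t ^ ((1 : ℝ) / d) := by
  rcases ht.eq_or_lt with rfl | ht
  · simp [oddRoot, Real.zero_rpow, hd]
  · simp [oddRoot, ht.not_ge]

lemma triE_subset :
    triE ⊆ {p : ℝ × ℝ | 0 ≤ p.2 ∧ p.2 - p.1 ≤ 1 ∧ 1 ≤ p.2 - 3 * p.1} := by
  refine convexHull_min ?_ ?_
  · rintro p (rfl | rfl | rfl) <;> norm_num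
  · rintro p ⟨hp₁, hp₂, hp₃⟩ q ⟨hq₁, hq₂, hq₃⟩ a b ha hb hab
    simp only [Set.mem_ofPred_eq, Prod.fst_add, Prod.snd_add, Prod.smul_fst, Prod.smul_snd,
      smul_eq_mul]
    refine ⟨by positivity, ?_, ?_⟩ <;>
      nlinarith [mul_le_mul_of_nonneg_left hp₂ ha, mul_le_mul_of_nonneg_left hq₂ hb,
        mul_le_mul_of_nonneg_left hp₃ ha, mul_le_mul_of_nonneg_left hq₃ hb]

lemma eq_one_of_rpow_eq_of_one_le {r s t : ℝ} (hr : 0 < r) (ht₀ : 0 ≤ t) (ht₁ : t ≤ 1)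
    (hs : 1 ≤ s) (h : t ^ r = s) : t = 1 ∧ s = 1 := by
  have hts : t ^ r ≤ 1 := Real.rpow_le_one ht₀ ht₁ hr.le
  have ht : ¬ t < 1 := fun ht ↦ by
    linarith [(Real.rpow_lt_one_iff' ht₀ hr).2 ht]
  exact ⟨le_antisymm ht₁ (not_lt.1 ht), by linarith⟩

lemma Gfun_eq {d : ℕ} (hd : d ≠ 0) {x y : ℝ} (hxy : x ≤ y) :
    Gfun d (x, y) = 2 * ((y - 3 * x) - (y - x) ^ ((1 : ℝ) / d)) := by
  rw [Gfun, ← neg_sub y x, oddRoot_neg hd (sub_nonneg.2 hxy)]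
  ring

theorem Gfun_nonneg_and_eq_zero_iff {d : ℕ} (hd : d ≠ 0) {p : ℝ × ℝ} (hp : p ∈ triE) :
    0 ≤ Gfun d p ∧ (Gfun d p = 0 ↔ p = (0, 1)) := by
  obtain ⟨x, y⟩ := p
  obtain ⟨hy, hxy₁, hxy₃⟩ := triE_subset hp
  have hr : (0 : ℝ) < 1 / d := by positivity
  rw [Gfun_eq hd (by linarith)]
  refine ⟨by linarith [Real.rpow_le_one (by linarith) hxy₁ hr.le], ⟨fun h ↦ ?_, ?_⟩⟩
  · obtain ⟨h₁, h₃⟩ := eq_one_of_rpow_eq_of_one_le hr (by linarith) hxy₁ hxy₃ (by linarith)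
    rw [Prod.mk.injEq]
    constructor <;> linarith
  · rintro ⟨⟩
    norm_num

lemma gfun_eq_Gfun_add (d : ℕ) (p : ℝ × ℝ) : gfun d p = Gfun d p + p.2 := by
  rw [gfun, Gfun]
  ring

theorem stmt14_general (d : ℕ) (hd : 3 ≤ d) :
    (∀ p ∈ triE, 0 ≤ Gfun d p ∧ (Gfun d p = 0 ↔ p = (0, 1))) ∧
    (∀ p ∈ triE, p.2 ≤ gfun d p ∧ (gfun d p = p.2 ↔ p = (0, 1))) := by
  have hd₀ : d ≠ 0 := by omega
  refine ⟨fun p hp ↦ Gfun_nonneg_and_eq_zero_iff hd₀ hp, fun p hp ↦ ?_⟩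
  obtain ⟨hG, hG_eq⟩ := Gfun_nonneg_and_eq_zero_iff hd₀ hp
  rw [gfun_eq_Gfun_add, add_eq_right, ← hG_eq]
  exact ⟨by linarith, Iff.rfl⟩

/-- `G ≥ 0` on `ℰ`, vanishing only at `(0,1)`; equivalently the
second component of `T_d⁻²` satisfies `g(x,y) ≥ y` on `ℰ` with equality only at
`(0,1)`. -/
theorem stmt14 (d : ℕ) (hd : 3 ≤ d) (hodd : Odd d) :
    (∀ p ∈ triE, 0 ≤ Gfun d p ∧ (Gfun d p = 0 ↔ p = (0, 1))) ∧
    (∀ p ∈ triE, p.2 ≤ gfun d p ∧ (gfun d p = p.2 ↔ p = (0, 1))) :=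
  stmt14_general d hd
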